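/- arXiv:2312.17630 — 4 statements merged into one kernel-verified Lean document; each statement's English description precedes it below -/
import Mathlib

section
/- For every finite simple graph G with at least one vertex, Δ(G) ≥ d_max(G) − 1, where d_max(G) is the maximum degree of G. -/
open scoped Classical

/-- The constraint matrix `M(G) = [[I, B], [Bᵀ, I]]` of the total matching IP,
with rows and columns indexed by `V(G) ⊔ E(G)`. -/
noncomputable def totalMatrix {V : Type*} (G : SimpleGraph V) :
    Matrix (V ⊕ G.edgeSet) (V ⊕ G.edgeSet) ℤ := fun a b =>
  match a, b with
  | Sum.inl v, Sum.inl w => if v = w then 1 else 0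
  | Sum.inl v, Sum.inr e => if v ∈ (e : Sym2 V) then 1 else 0
  | Sum.inr e, Sum.inl v => if v ∈ (e : Sym2 V) then 1 else 0
  | Sum.inr e, Sum.inr f => if e = f then 1 else 0

/-- `Δ(G)`: the maximum absolute value of the determinant of a square submatrix of `M(G)`
(the empty submatrix, of determinant `1`, is allowed). -/
noncomputable def maxSubdet {V : Type*} (G : SimpleGraph V) : ℕ :=
  sSup {d : ℕ | ∃ (k : ℕ) (f g : Fin k → (V ⊕ G.edgeSet)),
    Function.Injective f ∧ Function.Injective g ∧
    d = ((totalMatrix G).submatrix f g).det.natAbs}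

lemma det_aux (d : ℕ) :
    (Matrix.fromBlocks (1 : Matrix (Fin 1) (Fin 1) ℤ)
      (Matrix.of fun _ _ => 1) (Matrix.of fun _ _ => 1)
      (1 : Matrix (Fin d) (Fin d) ℤ)).det = 1 - d := by
  rw [Matrix.det_fromBlocks_one₂₂]
  simp [Matrix.det_fin_one, Matrix.mul_apply, Matrix.sub_apply]

lemma entry_le_one {V : Type*} (G : SimpleGraph V) (a b : V ⊕ G.edgeSet) :
    |totalMatrix G a b| ≤ 1 := by
  rcases a with a | a <;> rcases b with b | b <;>
    simp only [totalMatrix] <;> split_ifs <;> simp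

lemma bddAbove_set {V : Type*} [Fintype V] (G : SimpleGraph V) :
    BddAbove {d : ℕ | ∃ (k : ℕ) (f g : Fin k → (V ⊕ G.edgeSet)),
      Function.Injective f ∧ Function.Injective g ∧
      d = ((totalMatrix G).submatrix f g).det.natAbs} := by
  classical
  haveI : Fintype G.edgeSet := (Set.toFinite _).fintype
  refine ⟨(Fintype.card (V ⊕ G.edgeSet)).factorial, ?_⟩
  rintro d ⟨k, f, g, hf, hg, rfl⟩
  have hk : k ≤ Fintype.card (V ⊕ G.edgeSet) := by
    simpa using Fintype.card_le_of_injective f hf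
  have hb : ∀ i j, |((totalMatrix G).submatrix f g) i j| ≤ (1 : ℤ) :=
    fun i j => entry_le_one G _ _
  have := Matrix.det_le (abv := (AbsoluteValue.abs : AbsoluteValue ℤ ℤ)) hb
  simp only [Fintype.card_fin, one_pow, smul_eq_mul, mul_one] at this
  have h2 : ((totalMatrix G).submatrix f g).det.natAbs ≤ k.factorial := by
    have h3 : |((totalMatrix G).submatrix f g).det| ≤ (k.factorial : ℤ) := by
      simpa using this
    rw [Int.abs_eq_natAbs] at h3
    exact_mod_cast h3
  exact h2.trans (Nat.factorial_le hk)

/-- For every finite simple graph `G` with at least one vertex,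
`Δ(G) ≥ d_max(G) - 1` where `d_max(G)` is the maximum degree. -/
theorem stmt1 {V : Type*} [Fintype V] [Nonempty V] (G : SimpleGraph V)
    [DecidableRel G.Adj] :
    (G.maxDegree : ℤ) - 1 ≤ (maxSubdet G : ℤ) := by
  classical
  obtain ⟨v, hv⟩ := G.exists_maximal_degree_vertex
  set d := G.maxDegree with hd
  have hcard : (G.incidenceFinset v).card = d := by
    rw [SimpleGraph.card_incidenceFinset_eq_degree, hv]
  let ι : Fin d ≃ {x // x ∈ G.incidenceFinset v} :=
    ((G.incidenceFinset v).equivFin.trans (finCongr hcard)).symm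
  have hmem : ∀ i : Fin d, ((ι i : Sym2 V) ∈ G.edgeSet ∧ v ∈ (ι i : Sym2 V)) := by
    intro i
    have := (ι i).2
    rw [SimpleGraph.mem_incidenceFinset] at this
    exact this
  let F : Fin 1 ⊕ Fin d → V ⊕ G.edgeSet :=
    Sum.elim (fun _ => Sum.inl v) (fun i => Sum.inr ⟨(ι i : Sym2 V), (hmem i).1⟩)
  have hFinj : Function.Injective F := by
    rintro (a | a) (b | b) h
    · exact congrArg Sum.inl (Subsingleton.elim a b)
    · simp [F] at h
    · simp [F] at h
    · simp only [F, Sum.elim_inr, Sum.inr.injEq, Subtype.mk.injEq] at h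
      have : ι a = ι b := Subtype.ext h
      simpa using ι.injective this
  have hsub : (totalMatrix G).submatrix F F =
      Matrix.fromBlocks (1 : Matrix (Fin 1) (Fin 1) ℤ)
        (Matrix.of fun _ _ => 1) (Matrix.of fun _ _ => 1)
        (1 : Matrix (Fin d) (Fin d) ℤ) := by
    ext a b
    rcases a with a | a <;> rcases b with b | b
    · simp [F, totalMatrix, Matrix.fromBlocks, Matrix.one_apply, Subsingleton.elim a b]
    · simp [F, totalMatrix, Matrix.fromBlocks, (hmem b).2]
    · simp [F, totalMatrix, Matrix.fromBlocks, (hmem a).2]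
    · have : (⟨(ι a : Sym2 V), (hmem a).1⟩ : G.edgeSet) = ⟨(ι b : Sym2 V), (hmem b).1⟩ ↔ a = b := by
        constructor
        · intro h
          simp only [Subtype.mk.injEq] at h
          exact ι.injective (Subtype.ext h)
        · rintro rfl; rfl
      simp only [F, totalMatrix, Matrix.submatrix_apply, Sum.elim_inr,
        Matrix.fromBlocks_apply₂₂, Matrix.one_apply, this]
  have hdet : ((totalMatrix G).submatrix F F).det = 1 - d := by
    rw [hsub, det_aux]
  -- reindex to Fin (1 + d)
  let e : Fin (1 + d) ≃ Fin 1 ⊕ Fin d := finSumFinEquiv.symm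
  have hmem2 : (1 - (d : ℤ)).natAbs ∈ {m : ℕ | ∃ (k : ℕ) (f g : Fin k → (V ⊕ G.edgeSet)),
      Function.Injective f ∧ Function.Injective g ∧
      m = ((totalMatrix G).submatrix f g).det.natAbs} := by
    refine ⟨1 + d, F ∘ e, F ∘ e, hFinj.comp e.injective, hFinj.comp e.injective, ?_⟩
    have : (totalMatrix G).submatrix (F ∘ e) (F ∘ e) =
        ((totalMatrix G).submatrix F F).submatrix e e := rfl
    rw [this, Matrix.det_submatrix_equiv_self, hdet]
  have hle : (1 - (d : ℤ)).natAbs ≤ maxSubdet G := le_csSup (bddAbove_set G) hmem2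
  have h1 : (d : ℤ) - 1 ≤ ((1 - (d : ℤ)).natAbs : ℤ) := by
    rw [Int.natCast_natAbs]
    have := neg_le_abs (1 - (d : ℤ))
    linarith
  calc (d : ℤ) - 1 ≤ ((1 - (d : ℤ)).natAbs : ℤ) := h1
    _ ≤ (maxSubdet G : ℤ) := by exact_mod_cast hle
end

section
/- Let k be a natural number. If a finite simple graph G contains k pairwise vertex-disjoint cycles, then Δ(G) ≥ 2^k. -/
open scoped Classical

lemma perm_classify (m : ℕ) (hm : 2 ≤ m) (τ : Equiv.Perm (ZMod m))
    (hτ : ∀ b, τ b = b ∨ τ b = b + 1) : τ = 1 ∨ τ = Equiv.addLeft 1 := by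
  haveI : NeZero m := ⟨by omega⟩
  haveI : Fact (1 < m) := ⟨by omega⟩
  by_cases h1 : τ = 1
  · exact Or.inl h1
  · right
    have hb : ∃ b, τ b ≠ b := by
      by_contra h; push_neg at h; exact h1 (Equiv.ext h)
    obtain ⟨b₀, hb₀⟩ := hb
    have hb₀' : τ b₀ = b₀ + 1 := (hτ b₀).resolve_left hb₀
    have key : ∀ t : ℕ, τ (b₀ + t) = b₀ + t + 1 := by
      intro t
      induction t with
      | zero => simpa using hb₀'
      | succ t ih =>
        have hc : ((t + 1 : ℕ) : ZMod m) = (t : ZMod m) + 1 := by push_cast; ring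
        rw [hc]
        rcases hτ (b₀ + ((t : ZMod m) + 1)) with h | h
        · exfalso
          have h2 : b₀ + ((t : ZMod m) + 1) = b₀ + t := by
            apply τ.injective
            rw [h, ih]
            ring
          have h3 : (t : ZMod m) + 1 = t := add_left_cancel h2
          have h10 : (1 : ZMod m) = 0 := by linear_combination h3
          exact one_ne_zero h10
        · rw [← add_assoc] at h
          rw [← add_assoc, h]
    ext x
    have hx := key ((x - b₀).val)
    rw [ZMod.natCast_rightInverse (x - b₀)] at hx
    simp only [add_sub_cancel] at hx
    rw [hx]
    simp [add_comm]

lemma pow_addLeft (m : ℕ) (t : ℕ) (x : ZMod m) :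
    ((Equiv.addLeft (1 : ZMod m)) ^ t) x = x + t := by
  induction t generalizing x with
  | zero => simp
  | succ t ih =>
    rw [pow_succ, Equiv.Perm.mul_apply, ih]
    simp only [Equiv.coe_addLeft]
    push_cast
    ring

lemma sign_addLeft_one (m : ℕ) [NeZero m] (h3 : 3 ≤ m) (hodd : Odd m) :
    Equiv.Perm.sign (Equiv.addLeft (1 : ZMod m)) = 1 := by
  haveI : Fact (1 < m) := ⟨by omega⟩
  set σ : Equiv.Perm (ZMod m) := Equiv.addLeft 1 with hσ
  have hcyc : σ.IsCycle := by
    refine ⟨0, ?_, ?_⟩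
    · simp only [hσ, Equiv.coe_addLeft, add_zero]
      exact one_ne_zero
    · intro y hy
      refine ⟨(y.val : ℤ), ?_⟩
      rw [zpow_natCast]
      have := pow_addLeft m y.val 0
      rw [hσ]
      rw [this, zero_add, ZMod.natCast_rightInverse]
  have hsupp : σ.support = Finset.univ := by
    ext x
    simp only [Equiv.Perm.mem_support, Finset.mem_univ, iff_true]
    simp only [hσ, Equiv.coe_addLeft]
    intro h
    have h10 : (1 : ZMod m) = 0 := by linear_combination h
    exact one_ne_zero h10
  rw [hcyc.sign, hsupp, Finset.card_univ, ZMod.card, hodd.neg_one_pow]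
  exact neg_neg 1

lemma core_det (m : ℕ) [NeZero m] (hodd : Odd m) (h3 : 3 ≤ m) (M : Matrix (ZMod m) (ZMod m) ℤ)
    (hM : ∀ a b, M a b = if a = b ∨ a = b + 1 then 1 else 0) : M.det = 2 := by
  haveI : Fact (1 < m) := ⟨by omega⟩
  set σ : Equiv.Perm (ZMod m) := Equiv.addLeft 1 with hσ
  have h1σ : (1 : Equiv.Perm (ZMod m)) ≠ σ := by
    intro h
    have := congrFun (congrArg DFunLike.coe h) 0
    simp only [hσ, Equiv.Perm.coe_one, id_eq, Equiv.coe_addLeft, add_zero] at this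
    exact one_ne_zero this.symm
  rw [Matrix.det_apply]
  have hsub := Finset.sum_subset (Finset.subset_univ ({1, σ} : Finset (Equiv.Perm (ZMod m))))
    (f := fun τ => Equiv.Perm.sign τ • ∏ i, M (τ i) i) ?_
  · rw [← hsub, Finset.sum_pair h1σ]
    have t1 : ∏ i, M ((1 : Equiv.Perm (ZMod m)) i) i = 1 := by
      apply Finset.prod_eq_one; intro i _; rw [hM]; simp
    have t2 : ∏ i, M (σ i) i = 1 := by
      apply Finset.prod_eq_one; intro i _; rw [hM]
      simp [hσ, add_comm]
    rw [t1, t2, map_one, sign_addLeft_one m h3 hodd]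
    norm_num
  · intro τ _ hτ
    simp only [Finset.mem_insert, Finset.mem_singleton] at hτ
    push_neg at hτ
    have hno : ¬ (∀ b, τ b = b ∨ τ b = b + 1) := by
      intro h
      rcases perm_classify m (by omega) τ h with h | h
      · exact hτ.1 h
      · exact hτ.2 h
    push_neg at hno
    obtain ⟨b, hb⟩ := hno
    have hzero : M (τ b) b = 0 := by
      rw [hM]; simp only [ite_eq_right_iff]; rintro (h | h)
      · exact absurd h hb.1
      · exact absurd h hb.2
    have hp : ∏ i, M (τ i) i = 0 := Finset.prod_eq_zero (Finset.mem_univ b) hzero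
    simp [hp]

def SuppP {V : Type*} {G : SimpleGraph V} {x y : V} (W : G.Walk x y) :
    V ⊕ G.edgeSet → Prop
  | Sum.inl v => v ∈ W.support
  | Sum.inr e => ∀ v ∈ (e : Sym2 V), v ∈ W.support

lemma walk_support_getElem {V : Type*} {G : SimpleGraph V} {x y : V} (p : G.Walk x y)
    (i : ℕ) (h : i < p.support.length) : p.support[i] = p.getVert i := by
  induction p generalizing i with
  | nil =>
    simp only [SimpleGraph.Walk.support_nil, List.length_singleton] at h
    interval_cases i
    simp [SimpleGraph.Walk.getVert_zero]
  | cons hadj q ih =>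
    cases i with
    | zero => simp
    | succ i =>
      simp only [SimpleGraph.Walk.support_cons, List.getElem_cons_succ,
        SimpleGraph.Walk.getVert_cons_succ]
      apply ih

lemma zmod_val_eq_iff {m : ℕ} [NeZero m] (a b : ZMod m) : a = b ↔ a.val = b.val :=
  ⟨fun h => by rw [h], fun h => ZMod.val_injective m h⟩

lemma zmod_eq_add_one_iff {m : ℕ} [NeZero m] [Fact (1 < m)] (a b : ZMod m) :
    a = b + 1 ↔ a.val = (b.val + 1) % m := by
  have hv : (b + 1).val = (b.val + 1) % m := by rw [ZMod.val_add, ZMod.val_one]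
  constructor
  · rintro rfl; exact hv
  · intro h; exact ZMod.val_injective m (h.trans hv.symm)

lemma cycle_data {V : Type*} {G : SimpleGraph V} {u : V} (W : G.Walk u u) (hW : W.IsCycle) :
    ∃ (m : ℕ), Odd m ∧ 3 ≤ m ∧ ∃ (r c : ZMod m → V ⊕ G.edgeSet),
      Function.Injective r ∧ Function.Injective c ∧
      (∀ a b, totalMatrix G (r a) (c b) = if a = b ∨ a = b + 1 then 1 else 0) ∧
      (∀ a, SuppP W (r a)) ∧ (∀ a, SuppP W (c a)) := by
  set n := W.length with hn
  have h3 : 3 ≤ n := hW.three_le_length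
  set g : ℕ → V := W.getVert with hg
  have hgn : g n = g 0 := by
    rw [hg, hn, SimpleGraph.Walk.getVert_length, SimpleGraph.Walk.getVert_zero]
  have hadj : ∀ i, i < n → s(g i, g (i+1)) ∈ G.edgeSet := by
    intro i h
    exact (W.adj_getVert_succ h)
  have hmem : ∀ i, i ≤ n → g i ∈ W.support := by
    intro i h
    exact SimpleGraph.Walk.mem_support_iff_exists_getVert.mpr ⟨i, rfl, h⟩
  -- injectivity of getVert on [0, n)
  have hginj : ∀ i j, i < n → j < n → (g i = g j ↔ i = j) := by
    have hlen : W.support.tail.length = n := by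
      rw [List.length_tail, W.length_support]; omega
    have htail : ∀ t (ht : t < n), W.support.tail[t]'(by omega) = g (t+1) := by
      intro t ht
      rw [List.getElem_tail]
      exact walk_support_getElem W (t+1) (by rw [W.length_support]; omega)
    have inj1 : ∀ i j, 1 ≤ i → i ≤ n → 1 ≤ j → j ≤ n → g i = g j → i = j := by
      intro i j hi1 hin hj1 hjn hgij
      have h1 : W.support.tail[i-1]'(by omega) = g i := by
        rw [htail (i-1) (by omega)]; congr 1; omega
      have h2 : W.support.tail[j-1]'(by omega) = g j := by
        rw [htail (j-1) (by omega)]; congr 1; omega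
      have := (hW.support_nodup.getElem_inj_iff).mp ((h1.trans hgij).trans h2.symm)
      omega
    intro i j hi hj
    constructor
    · intro hgij
      rcases Nat.eq_zero_or_pos i with hi0 | hi0
      · rcases Nat.eq_zero_or_pos j with hj0 | hj0
        · omega
        · subst hi0
          rw [← hgn] at hgij
          have := inj1 n j (by omega) le_rfl hj0 (by omega) hgij
          omega
      · rcases Nat.eq_zero_or_pos j with hj0 | hj0
        · subst hj0
          rw [← hgn] at hgij
          have := inj1 i n hi0 (by omega) (by omega) le_rfl hgij
          omega
        · exact inj1 i j hi0 (by omega) hj0 (by omega) hgij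
    · rintro rfl; rfl
  -- membership in edges
  have hmemedge : ∀ i j, i < n → j < n → (g i ∈ s(g j, g (j+1)) ↔ (i = j ∨ i = (j+1) % n)) := by
    intro i j hi hj
    rw [Sym2.mem_iff]
    rcases Nat.lt_or_ge (j+1) n with hj1 | hj1
    · rw [hginj i j hi hj, hginj i (j+1) hi hj1, Nat.mod_eq_of_lt hj1]
    · have hjn : j + 1 = n := by omega
      rw [hjn, hgn, Nat.mod_self, hginj i j hi hj, hginj i 0 hi (by omega)]
  -- injectivity of edges
  have hedgeinj : ∀ i j, i < n → j < n → s(g i, g (i+1)) = s(g j, g (j+1)) → i = j := by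
    intro i j hi hj h
    rw [Sym2.eq_iff] at h
    rcases h with ⟨h1, _⟩ | ⟨h1, h2⟩
    · exact (hginj i j hi hj).mp h1
    · exfalso
      -- g i = g (j+1), g (i+1) = g j
      rcases Nat.lt_or_ge (j+1) n with hj1 | hj1
      · have hij : i = j + 1 := (hginj i (j+1) hi hj1).mp h1
        rcases Nat.lt_or_ge (i+1) n with hi1 | hi1
        · have := (hginj (i+1) j hi1 hj).mp h2
          omega
        · have hin : i + 1 = n := by omega
          rw [hin, hgn] at h2
          have := (hginj 0 j (by omega) hj).mp h2
          omega
      · have hjn : j + 1 = n := by omega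
        rw [hjn, hgn] at h1
        have hi0 : i = 0 := (hginj i 0 hi (by omega)).mp h1
        subst hi0
        have := (hginj 1 j (by omega) hj).mp h2
        omega
  rcases Nat.even_or_odd n with heven | hodd
  · -- n even : auxiliary odd cycle of length n+1
    haveI : NeZero (n+1) := ⟨by omega⟩
    haveI : Fact (1 < (n+1)) := ⟨by omega⟩
    have hen : s(g (n-1), g n) ∈ G.edgeSet := by
      have := hadj (n-1) (by omega)
      rwa [show n-1+1 = n by omega] at this
    set rE : ZMod (n + 1) → V ⊕ G.edgeSet := fun a =>
      if a.val < n then Sum.inl (g a.val) else Sum.inr ⟨s(g (n-1), g n), hen⟩ with hrE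
    set cE : ZMod (n + 1) → V ⊕ G.edgeSet := fun b =>
      if h : b.val < n - 1 then Sum.inr ⟨s(g b.val, g (b.val+1)), hadj b.val (by omega)⟩
      else if b.val = n - 1 then Sum.inl (g (n-1)) else Sum.inl (g 0) with hcE
    have hcase : ∀ x : ZMod (n+1), x.val < n - 1 ∨ x.val = n - 1 ∨ x.val = n := by
      intro x; have := ZMod.val_lt x; omega
    refine ⟨n+1, Even.add_one heven, by omega, rE, cE, ?_, ?_, ?_, ?_, ?_⟩
    · -- injectivity of rE
      intro a b h
      have hva := ZMod.val_lt a
      have hvb := ZMod.val_lt b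
      simp only [hrE] at h
      by_cases ha : a.val < n
      · by_cases hb : b.val < n
        · rw [if_pos ha, if_pos hb] at h
          simp only [Sum.inl.injEq] at h
          exact ZMod.val_injective _ ((hginj _ _ ha hb).mp h)
        · rw [if_pos ha, if_neg hb] at h; simp at h
      · by_cases hb : b.val < n
        · rw [if_neg ha, if_pos hb] at h; simp at h
        · exact ZMod.val_injective _ (by omega)
    · -- injectivity of cE
      intro a b h
      simp only [hcE] at h
      rcases hcase a with h1 | h1 | h1 <;> rcases hcase b with h2 | h2 | h2
      · rw [dif_pos h1, dif_pos h2] at h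
        simp only [Sum.inr.injEq, Subtype.mk.injEq] at h
        exact ZMod.val_injective _ (hedgeinj _ _ (by omega) (by omega) h)
      · rw [dif_pos h1, dif_neg (by omega), if_pos h2] at h; simp at h
      · rw [dif_pos h1, dif_neg (by omega), if_neg (by omega)] at h; simp at h
      · rw [dif_neg (by omega), if_pos h1, dif_pos h2] at h; simp at h
      · exact ZMod.val_injective _ (by omega)
      · rw [dif_neg (by omega), if_pos h1, dif_neg (by omega), if_neg (by omega)] at h
        simp only [Sum.inl.injEq] at h
        have := (hginj (n-1) 0 (by omega) (by omega)).mp h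
        omega
      · rw [dif_neg (by omega), if_neg (by omega), dif_pos h2] at h; simp at h
      · rw [dif_neg (by omega), if_neg (by omega), dif_neg (by omega), if_pos h2] at h
        simp only [Sum.inl.injEq] at h
        have := (hginj 0 (n-1) (by omega) (by omega)).mp h
        omega
      · exact ZMod.val_injective _ (by omega)
    · -- entries
      intro a b
      have hva := ZMod.val_lt a
      have hvb := ZMod.val_lt b
      simp only [hrE, hcE]
      by_cases ha : a.val < n
      · rw [if_pos ha]
        rcases hcase b with hb | hb | hb
        · rw [dif_pos hb]
          show (if g a.val ∈ s(g b.val, g (b.val+1)) then (1:ℤ) else 0) = _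
          have hiff : (g a.val ∈ s(g b.val, g (b.val+1))) ↔ (a = b ∨ a = b + 1) := by
            rw [hmemedge a.val b.val ha (by omega), zmod_val_eq_iff a b,
              zmod_eq_add_one_iff a b,
              Nat.mod_eq_of_lt (show b.val + 1 < n by omega),
              Nat.mod_eq_of_lt (show b.val + 1 < n+1 by omega)]
          exact if_congr hiff rfl rfl
        · rw [dif_neg (by omega), if_pos hb]
          show (if g a.val = g (n-1) then (1:ℤ) else 0) = _
          have hiff : (g a.val = g (n-1)) ↔ (a = b ∨ a = b + 1) := by
            rw [hginj a.val (n-1) ha (by omega), zmod_val_eq_iff a b,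
              zmod_eq_add_one_iff a b, hb,
              Nat.mod_eq_of_lt (show n-1+1 < n+1 by omega)]
            omega
          exact if_congr hiff rfl rfl
        · rw [dif_neg (by omega), if_neg (by omega)]
          show (if g a.val = g 0 then (1:ℤ) else 0) = _
          have hiff : (g a.val = g 0) ↔ (a = b ∨ a = b + 1) := by
            rw [hginj a.val 0 ha (by omega), zmod_val_eq_iff a b,
              zmod_eq_add_one_iff a b, hb, Nat.mod_self]
            omega
          exact if_congr hiff rfl rfl
      · have ha' : a.val = n := by omega
        rw [if_neg ha]
        rcases hcase b with hb | hb | hb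
        · rw [dif_pos hb]
          show (if (⟨s(g (n-1), g n), hen⟩ : G.edgeSet) = ⟨s(g b.val, g (b.val+1)), hadj b.val (by omega)⟩ then (1:ℤ) else 0) = _
          have hiff : ((⟨s(g (n-1), g n), hen⟩ : G.edgeSet) = ⟨s(g b.val, g (b.val+1)), hadj b.val (by omega)⟩) ↔ (a = b ∨ a = b + 1) := by
            rw [Subtype.mk.injEq, zmod_val_eq_iff a b, zmod_eq_add_one_iff a b,
              Nat.mod_eq_of_lt (show b.val + 1 < n+1 by omega)]
            constructor
            · intro h
              have h' : s(g (n-1), g (n-1+1)) = s(g b.val, g (b.val+1)) := by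
                rwa [show n-1+1 = n by omega]
              have := hedgeinj (n-1) b.val (by omega) (by omega) h'
              omega
            · intro h; omega
          exact if_congr hiff rfl rfl
        · rw [dif_neg (by omega), if_pos hb]
          show (if g (n-1) ∈ s(g (n-1), g n) then (1:ℤ) else 0) = _
          have hiff : (g (n-1) ∈ s(g (n-1), g n)) ↔ (a = b ∨ a = b + 1) := by
            rw [Sym2.mem_iff, zmod_val_eq_iff a b, zmod_eq_add_one_iff a b, hb,
              Nat.mod_eq_of_lt (show n-1+1 < n+1 by omega)]
            constructor
            · intro _; right; omega
            · intro _; left; rfl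
          exact if_congr hiff rfl rfl
        · rw [dif_neg (by omega), if_neg (by omega)]
          show (if g 0 ∈ s(g (n-1), g n) then (1:ℤ) else 0) = _
          have hiff : (g 0 ∈ s(g (n-1), g n)) ↔ (a = b ∨ a = b + 1) := by
            rw [Sym2.mem_iff, zmod_val_eq_iff a b, zmod_eq_add_one_iff a b, hb,
              Nat.mod_self]
            constructor
            · intro _; left; omega
            · intro _; right; exact hgn.symm
          exact if_congr hiff rfl rfl
    · -- support of rows
      intro a
      simp only [hrE]
      split_ifs with ha
      · exact hmem a.val (by omega)
      · intro v hv
        rw [Sym2.mem_iff] at hv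
        rcases hv with rfl | rfl
        · exact hmem (n-1) (by omega)
        · exact hmem n le_rfl
    · -- support of cols
      intro b
      have hvb := ZMod.val_lt b
      simp only [hcE]
      split_ifs with h1 h2
      · intro v hv
        rw [Sym2.mem_iff] at hv
        rcases hv with rfl | rfl
        · exact hmem b.val (by omega)
        · exact hmem (b.val+1) (by omega)
      · exact hmem (n-1) (by omega)
      · exact hmem 0 (by omega)
  · -- n odd : use the incidence matrix of the cycle itself
    haveI : NeZero n := ⟨by omega⟩
    haveI : Fact (1 < n) := ⟨by omega⟩
    refine ⟨n, hodd, h3, fun a => Sum.inl (g a.val),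
      fun b => Sum.inr ⟨s(g b.val, g (b.val+1)), hadj b.val (ZMod.val_lt b)⟩, ?_, ?_, ?_, ?_, ?_⟩
    · intro a b h
      simp only [Sum.inl.injEq] at h
      exact ZMod.val_injective _ ((hginj _ _ (ZMod.val_lt a) (ZMod.val_lt b)).mp h)
    · intro a b h
      simp only [Sum.inr.injEq, Subtype.mk.injEq] at h
      exact ZMod.val_injective _ (hedgeinj _ _ (ZMod.val_lt a) (ZMod.val_lt b) h)
    · intro a b
      show (if g a.val ∈ s(g b.val, g (b.val+1)) then (1:ℤ) else 0) = _
      have hiff : (g a.val ∈ s(g b.val, g (b.val+1))) ↔ (a = b ∨ a = b + 1) := by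
        rw [hmemedge a.val b.val (ZMod.val_lt a) (ZMod.val_lt b), zmod_val_eq_iff a b,
          zmod_eq_add_one_iff a b]
      exact if_congr hiff rfl rfl
    · intro a
      exact hmem a.val (ZMod.val_lt a).le
    · intro b v hv
      rw [Sym2.mem_iff] at hv
      have := ZMod.val_lt b
      rcases hv with rfl | rfl
      · exact hmem b.val (by omega)
      · exact hmem (b.val+1) (by omega)

lemma suppP_ne {V : Type*} {G : SimpleGraph V} {u₁ u₂ : V} {W₁ : G.Walk u₁ u₁}
    {W₂ : G.Walk u₂ u₂} (hd : ∀ x, x ∈ W₁.support → x ∉ W₂.support) :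
    ∀ z, SuppP W₁ z → SuppP W₂ z → False := by
  intro z h1 h2
  cases z with
  | inl v => exact hd v h1 h2
  | inr e => exact hd _ (h1 _ (Sym2.out_fst_mem e.val)) (h2 _ (Sym2.out_fst_mem e.val))

lemma suppP_entry_zero {V : Type*} {G : SimpleGraph V} {u₁ u₂ : V} {W₁ : G.Walk u₁ u₁}
    {W₂ : G.Walk u₂ u₂} (hd : ∀ x, x ∈ W₁.support → x ∉ W₂.support)
    (x y : V ⊕ G.edgeSet) (hx : SuppP W₁ x) (hy : SuppP W₂ y) : totalMatrix G x y = 0 := by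
  cases x with
  | inl v =>
    cases y with
    | inl w =>
      show (if v = w then (1:ℤ) else 0) = 0
      rw [if_neg]; rintro rfl; exact hd v hx hy
    | inr e =>
      show (if v ∈ (e : Sym2 V) then (1:ℤ) else 0) = 0
      rw [if_neg]; intro hv; exact hd v hx (hy v hv)
  | inr e =>
    cases y with
    | inl w =>
      show (if w ∈ (e : Sym2 V) then (1:ℤ) else 0) = 0
      rw [if_neg]; intro hv; exact hd w (hx w hv) hy
    | inr f =>
      show (if e = f then (1:ℤ) else 0) = 0
      rw [if_neg]; rintro rfl
      exact hd _ (hx _ (Sym2.out_fst_mem e.val)) (hy _ (Sym2.out_fst_mem e.val))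

lemma totalMatrix_entry_mem {V : Type*} (G : SimpleGraph V) (x y : V ⊕ G.edgeSet) :
    totalMatrix G x y = 0 ∨ totalMatrix G x y = 1 := by
  cases x with
  | inl v =>
    cases y with
    | inl w =>
      show (if v = w then (1:ℤ) else 0) = 0 ∨ (if v = w then (1:ℤ) else 0) = 1
      split_ifs <;> simp
    | inr e =>
      show (if v ∈ (e : Sym2 V) then (1:ℤ) else 0) = 0 ∨ (if v ∈ (e : Sym2 V) then (1:ℤ) else 0) = 1
      split_ifs <;> simp
  | inr e =>
    cases y with
    | inl w =>
      show (if w ∈ (e : Sym2 V) then (1:ℤ) else 0) = 0 ∨ (if w ∈ (e : Sym2 V) then (1:ℤ) else 0) = 1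
      split_ifs <;> simp
    | inr f =>
      show (if e = f then (1:ℤ) else 0) = 0 ∨ (if e = f then (1:ℤ) else 0) = 1
      split_ifs <;> simp

lemma natAbs_det_le {V : Type*} (G : SimpleGraph V) (κ : ℕ)
    (f g : Fin κ → V ⊕ G.edgeSet) :
    ((totalMatrix G).submatrix f g).det.natAbs ≤ κ.factorial := by
  have habs : |((totalMatrix G).submatrix f g).det| ≤ (κ.factorial : ℤ) := by
    rw [Matrix.det_apply]
    have h1 := Finset.abs_sum_le_sum_abs
      (fun σ : Equiv.Perm (Fin κ) =>
        Equiv.Perm.sign σ • ∏ i, (totalMatrix G).submatrix f g (σ i) i) Finset.univ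
    refine le_trans h1 ?_
    have h2 : ∀ σ : Equiv.Perm (Fin κ),
        |Equiv.Perm.sign σ • ∏ i, (totalMatrix G).submatrix f g (σ i) i| ≤ 1 := by
      intro σ
      rw [Units.smul_def, smul_eq_mul, abs_mul]
      have hsign : |((Equiv.Perm.sign σ : ℤˣ) : ℤ)| = 1 := by
        rw [Int.abs_eq_natAbs, Int.units_natAbs]; rfl
      rw [hsign, one_mul, Finset.abs_prod]
      apply Finset.prod_le_one
      · intro i _; exact abs_nonneg _
      · intro i _
        rcases totalMatrix_entry_mem G (f (σ i)) (g i) with h | h <;>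
          simp [Matrix.submatrix_apply, h]
    calc (∑ σ : Equiv.Perm (Fin κ),
          |Equiv.Perm.sign σ • ∏ i, (totalMatrix G).submatrix f g (σ i) i|)
        ≤ ∑ _σ : Equiv.Perm (Fin κ), (1 : ℤ) :=
          Finset.sum_le_sum (fun σ _ => h2 σ)
      _ = (κ.factorial : ℤ) := by
          rw [Finset.sum_const, Finset.card_univ, Fintype.card_perm, Fintype.card_fin]
          simp
  rw [Int.abs_eq_natAbs] at habs
  exact_mod_cast habs


/-- If a finite simple graph `G` contains `k` pairwise vertex-disjoint cycles,
then `Δ(G) ≥ 2^k`. -/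
theorem stmt2 {V : Type*} [Fintype V] (G : SimpleGraph V) (k : ℕ)
    (u : Fin k → V) (W : ∀ i : Fin k, G.Walk (u i) (u i))
    (hcyc : ∀ i : Fin k, (W i).IsCycle)
    (hdisj : ∀ i j : Fin k, i ≠ j →
      ∀ x : V, x ∈ (W i).support → x ∉ (W j).support) :
    2 ^ k ≤ maxSubdet G := by
  classical
  choose m hodd h3 r c hrinj hcinj hentry hrsupp hcsupp using
    fun i => cycle_data (W i) (hcyc i)
  haveI : ∀ i, NeZero (m i) := fun i => ⟨by have := h3 i; omega⟩
  set R : (Σ i : Fin k, ZMod (m i)) → V ⊕ G.edgeSet := fun x => r x.1 x.2 with hR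
  set Cc : (Σ i : Fin k, ZMod (m i)) → V ⊕ G.edgeSet := fun x => c x.1 x.2 with hCc
  set M : Matrix (Σ i : Fin k, ZMod (m i)) (Σ i : Fin k, ZMod (m i)) ℤ :=
    (totalMatrix G).submatrix R Cc with hM
  have hRinj : Function.Injective R := by
    rintro ⟨i, a⟩ ⟨j, b⟩ h
    by_cases hij : i = j
    · subst hij
      have : a = b := hrinj i h
      rw [this]
    · have h' : r i a = r j b := h
      exact (suppP_ne (hdisj i j hij) _ (hrsupp i a) (h'.symm ▸ hrsupp j b)).elim
  have hCinj : Function.Injective Cc := by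
    rintro ⟨i, a⟩ ⟨j, b⟩ h
    by_cases hij : i = j
    · subst hij
      have : a = b := hcinj i h
      rw [this]
    · have h' : c i a = c j b := h
      exact (suppP_ne (hdisj i j hij) _ (hcsupp i a) (h'.symm ▸ hcsupp j b)).elim
  have hBT : M.BlockTriangular Sigma.fst := by
    intro p q hpq
    exact suppP_entry_zero (hdisj p.1 q.1 (ne_of_gt hpq)) _ _
      (hrsupp p.1 p.2) (hcsupp q.1 q.2)
  have hblock : ∀ j : Fin k, (M.toSquareBlock Sigma.fst j).det = 2 := by
    intro j
    let e : ZMod (m j) ≃ {x : Σ i : Fin k, ZMod (m i) // x.1 = j} :=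
      { toFun := fun a => ⟨⟨j, a⟩, rfl⟩
        invFun := fun x => x.2 ▸ x.1.2
        left_inv := fun a => rfl
        right_inv := by rintro ⟨⟨i, a⟩, rfl⟩; rfl }
    rw [← Matrix.det_submatrix_equiv_self e]
    apply core_det (m j) (hodd j) (h3 j)
    intro a b
    show M ⟨j, a⟩ ⟨j, b⟩ = _
    exact hentry j a b
  have hdet : M.det = 2 ^ k := by
    rw [hBT.det_fintype, Finset.prod_congr rfl (fun j _ => hblock j),
      Finset.prod_const, Finset.card_univ, Fintype.card_fin]
  have hmemS : (2:ℕ) ^ k ∈ {d : ℕ | ∃ (k : ℕ) (f g : Fin k → (V ⊕ G.edgeSet)),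
      Function.Injective f ∧ Function.Injective g ∧
      d = ((totalMatrix G).submatrix f g).det.natAbs} := by
    let eF := Fintype.equivFin (Σ i : Fin k, ZMod (m i))
    refine ⟨Fintype.card (Σ i : Fin k, ZMod (m i)), R ∘ eF.symm, Cc ∘ eF.symm,
      hRinj.comp eF.symm.injective, hCinj.comp eF.symm.injective, ?_⟩
    have heq : (totalMatrix G).submatrix (R ∘ eF.symm) (Cc ∘ eF.symm)
        = M.submatrix eF.symm eF.symm := rfl
    rw [heq, Matrix.det_submatrix_equiv_self eF.symm, hdet]
    rw [Int.natAbs_pow]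
    norm_num
  have hbdd : BddAbove {d : ℕ | ∃ (k : ℕ) (f g : Fin k → (V ⊕ G.edgeSet)),
      Function.Injective f ∧ Function.Injective g ∧
      d = ((totalMatrix G).submatrix f g).det.natAbs} := by
    refine ⟨(Fintype.card (V ⊕ G.edgeSet)).factorial, ?_⟩
    rintro d ⟨κ, f, g, hf, hg, rfl⟩
    have hκ : κ ≤ Fintype.card (V ⊕ G.edgeSet) := by
      have := Fintype.card_le_of_injective f hf
      simpa using this
    exact le_trans (natAbs_det_le G κ f g) (Nat.factorial_le hκ)
  exact le_csSup hbdd hmemS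
end

section
/- Let M' ∈ {0,1}^{k×k} be a square 0/1 matrix having two distinct rows i and j such that M'_{i,c} ≤ M'_{j,c} for every column c and such that the two rows differ in at most one column. Then either det M' = 0, or there exist a row and a column of M' whose deletion yields a (k−1)×(k−1) submatrix M'' with |det M''| = |det M'|. The same conclusion holds with 'rows' replaced by 'columns'. -/
/-! If two 0/1 rows differ in exactly one column `c`, subtracting one from the other (which does
not change the determinant) leaves a row `±eᶜ`; Laplace expansion along it gives
`|det M| = |det M''|` for the minor `M''` obtained by deleting that row and column `c`.
If they differ nowhere, `det M = 0`. Columns reduce to rows by transposition. -/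

open Matrix

namespace Matrix

variable {R : Type*} {n : ℕ}

theorem det_updateRow_single [CommRing R] (A : Matrix (Fin (n + 1)) (Fin (n + 1)) R)
    (j c : Fin (n + 1)) (a : R) :
    (A.updateRow j (Pi.single c a)).det =
      (-1) ^ (j + c : ℕ) * a * (A.submatrix j.succAbove c.succAbove).det := by
  have hsingle : Pi.single c a = a • Pi.single c (1 : R) := by simp [← Pi.single_smul]
  rw [hsingle, det_updateRow_smul, ← adjugate_apply, adjugate_fin_succ_eq_det_submatrix]
  ring

theorem det_eq_of_sub_row_eq_single [CommRing R] (M : Matrix (Fin (n + 1)) (Fin (n + 1)) R)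
    {i j : Fin (n + 1)} (hij : i ≠ j) {c : Fin (n + 1)} {a : R}
    (h : M j - M i = Pi.single c a) :
    M.det = (-1) ^ (j + c : ℕ) * a * (M.submatrix j.succAbove c.succAbove).det := by
  rw [← det_updateRow_add_smul_self M hij.symm (-1), neg_one_smul, ← sub_eq_add_neg, h,
    det_updateRow_single]

variable [CommRing R] [LinearOrder R] [IsStrictOrderedRing R]

theorem eq_or_sub_eq_single_of_zero_one {ι : Type*} [DecidableEq ι] {u v : ι → R}
    (hu : ∀ c, u c = 0 ∨ u c = 1) (hv : ∀ c, v c = 0 ∨ v c = 1)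
    (hs : {c | u c ≠ v c}.Subsingleton) :
    u = v ∨ ∃ c a, |a| = 1 ∧ v - u = Pi.single c a := by
  by_cases huv : u = v
  · exact Or.inl huv
  obtain ⟨c, hc⟩ := Function.ne_iff.mp huv
  refine Or.inr ⟨c, v c - u c, ?_, funext fun d => ?_⟩
  · rcases hu c with hu' | hu' <;> rcases hv c with hv' | hv' <;> simp_all
  · by_cases hdc : d = c
    · subst hdc
      simp
    · have hud : u d = v d := by
        by_contra hne
        exact hdc (hs hne hc)
      simp [hdc, hud]

theorem det_eq_zero_or_exists_abs_det_submatrix_eq_of_rows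
    (M : Matrix (Fin (n + 1)) (Fin (n + 1)) R) (h01 : ∀ i j, M i j = 0 ∨ M i j = 1)
    {i j : Fin (n + 1)} (hij : i ≠ j) (hs : {c | M i c ≠ M j c}.Subsingleton) :
    M.det = 0 ∨ ∃ r c : Fin (n + 1),
      |(M.submatrix r.succAbove c.succAbove).det| = |M.det| := by
  rcases eq_or_sub_eq_single_of_zero_one (h01 i) (h01 j) hs with heq | ⟨c, a, ha, hsub⟩
  · exact Or.inl (det_zero_of_row_eq hij heq)
  · refine Or.inr ⟨j, c, ?_⟩
    simp [det_eq_of_sub_row_eq_single M hij hsub, abs_mul, ha]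

theorem det_eq_zero_or_exists_abs_det_submatrix_eq_of_cols
    (M : Matrix (Fin (n + 1)) (Fin (n + 1)) R) (h01 : ∀ i j, M i j = 0 ∨ M i j = 1)
    {i j : Fin (n + 1)} (hij : i ≠ j) (hs : {r | M r i ≠ M r j}.Subsingleton) :
    M.det = 0 ∨ ∃ r c : Fin (n + 1),
      |(M.submatrix r.succAbove c.succAbove).det| = |M.det| := by
  rcases det_eq_zero_or_exists_abs_det_submatrix_eq_of_rows Mᵀ (fun a b => h01 b a) hij hs with
    h | ⟨r, c, h⟩
  · exact Or.inl (by rwa [det_transpose] at h)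
  · refine Or.inr ⟨c, r, ?_⟩
    rwa [← transpose_submatrix, det_transpose, det_transpose] at h

end Matrix

/-- Let `M' ∈ {0,1}^{k×k}` be a square 0/1 matrix having two distinct rows `i, j` such that
row `i` is entrywise at most row `j` (containment of supports) and the two rows differ in at
most one column — i.e. `M'` has a fault — or the analogous condition on two columns.
Then either `det M' = 0`, or one can delete one row and one column to obtain a
`(k-1)×(k-1)` submatrix `M''` with `|det M''| = |det M'|`. -/
theorem stmt5 {n : ℕ} (M : Matrix (Fin (n + 1)) (Fin (n + 1)) ℤ)
    (h01 : ∀ i j, M i j = 0 ∨ M i j = 1)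
    (hfault :
      (∃ i j : Fin (n + 1), i ≠ j ∧ (∀ c, M i c ≤ M j c) ∧
        {c : Fin (n + 1) | M i c ≠ M j c}.Subsingleton) ∨
      (∃ i j : Fin (n + 1), i ≠ j ∧ (∀ r, M r i ≤ M r j) ∧
        {r : Fin (n + 1) | M r i ≠ M r j}.Subsingleton)) :
    M.det = 0 ∨ ∃ r c : Fin (n + 1),
      |(M.submatrix r.succAbove c.succAbove).det| = |M.det| := by
  rcases hfault with ⟨i, j, hij, -, hs⟩ | ⟨i, j, hij, -, hs⟩
  · exact det_eq_zero_or_exists_abs_det_submatrix_eq_of_rows M h01 hij hs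
  · exact det_eq_zero_or_exists_abs_det_submatrix_eq_of_cols M h01 hij hs
end

section
/- Let G be a finite simple forest, let d_1 ≥ d_2 ≥ ⋯ ≥ d_n be the degrees of the vertices of G in nonincreasing order, and let n_2 ≥ 1 be the number of vertices of G of degree at least 2. Then Δ(G) ≤ ( (∑_{i=1}^{n_2} d_i) / n_2 )^{n_2}. -/
/-!
Write `M_S` for `M(G)` with only the edges of a set `S` kept in its incidence blocks. By induction
on `S` we show `|det M_S[R, C]| ≤ ∏_{v ∈ R ∩ C ∩ V} max 1 (deg_S v)` for all rows `R` and columns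
`C`. A nonempty forest `S` has a pendant edge `e₀ = uw`, `u` a leaf. The column of `u` has its
nonzero entries in the rows `u, e₀` and that of `e₀` in the rows `e₀, u, w`; so, after possibly
subtracting column `e₀` from column `u`, there is always a row or column with a single entry `±1`
whose removal eventually takes `e₀` out of `R` and `C`, where `M_S` agrees with `M_{S - e₀}`.
The exception is `u ∉ R ∪ C`, `e₀, w ∈ R ∩ C`: there column `e₀` minus column `w` is `-1` exactly
in the rows of the other edges at `w`, and expanding along it gives `deg_S w - 1` minors, each
bounded by induction with `w` removed, which the factor `deg_S w` pays for. For `S = E(G)` the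
bound is the product of the degrees at least `2`, and AM-GM finishes.
-/

open scoped Classical

open Finset Matrix Function

theorem Finset.exists_injective_fin_image_eq {α : Type*} [DecidableEq α] (R : Finset α) {n : ℕ}
    (h : #R = n) : ∃ f : Fin n → α, Injective f ∧ univ.image f = R := by
  subst h
  refine ⟨fun i => R.equivFin.symm i, Subtype.val_injective.comp R.equivFin.symm.injective, ?_⟩
  ext a
  simp only [mem_image, mem_univ, true_and]
  exact ⟨by rintro ⟨i, rfl⟩; exact coe_mem _, fun ha => ⟨R.equivFin ⟨a, ha⟩, by simp⟩⟩

theorem Fin.univ_image_comp_succAbove {α : Type*} [DecidableEq α] {n : ℕ}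
    {f : Fin (n + 1) → α} (hf : Injective f) (i : Fin (n + 1)) :
    univ.image (f ∘ i.succAbove) = (univ.image f).erase (f i) := by
  rw [← image_image, Fin.image_succAbove_univ, ← image_erase hf, compl_singleton]

theorem Finset.sum_natAbs_mul_le_of_single {α : Type*} {s : Finset α} {a : α → ℤ} {x : α → ℕ}
    {r₀ : α} (h₀ : (a r₀).natAbs ≤ 1) (h : ∀ r ∈ s, r ≠ r₀ → a r = 0) :
    ∑ r ∈ s, (a r).natAbs * x r ≤ x r₀ :=
  calc ∑ r ∈ s, (a r).natAbs * x r ≤ ∑ r ∈ s, if r = r₀ then x r₀ else 0 := by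
        refine sum_le_sum fun r hr => ?_
        split_ifs with hr₀
        · subst hr₀; exact mul_le_of_le_one_left (Nat.zero_le _) h₀
        · simp [h r hr hr₀]
    _ ≤ x r₀ := by rw [sum_ite_eq']; split_ifs <;> simp

theorem Real.prod_le_arith_mean_pow {ι : Type*} (s : Finset ι) (z : ι → ℝ)
    (hz : ∀ i ∈ s, 0 ≤ z i) : ∏ i ∈ s, z i ≤ ((∑ i ∈ s, z i) / #s) ^ #s := by
  rcases s.eq_empty_or_nonempty with rfl | hs
  · simp
  have hn : (0 : ℝ) < #s := by exact_mod_cast hs.card_pos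
  have hgm := Real.geom_mean_le_arith_mean_weighted s (fun _ => (#s : ℝ)⁻¹) z
    (fun _ _ => by positivity) (by rw [sum_const, nsmul_eq_mul, mul_inv_cancel₀ hn.ne']) hz
  rw [Real.finsetProd_rpow s z hz, ← mul_sum, inv_mul_eq_div] at hgm
  calc ∏ i ∈ s, z i = ((∏ i ∈ s, z i) ^ (#s : ℝ)⁻¹) ^ #s :=
        (Real.rpow_inv_natCast_pow (prod_nonneg hz) hs.card_pos.ne').symm
    _ ≤ ((∑ i ∈ s, z i) / #s) ^ #s := pow_le_pow_left₀ (Real.rpow_nonneg (prod_nonneg hz) _) hgm _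

namespace SimpleGraph

variable {V : Type*} {G : SimpleGraph V}

theorem IsAcyclic.exists_adj_forall_adj_eq [Finite G.edgeSet] (hG : G.IsAcyclic) {a b : V}
    (hab : G.Adj a b) : ∃ u w, G.Adj u w ∧ ∀ z, G.Adj u z → z = w := by
  have : Nonempty V := ⟨a⟩
  obtain ⟨u, v, p, hp, hmax⟩ := Walk.exists_isPath_forall_isPath_length_le_length G
  have hnil : ¬p.Nil := fun hnil => by
    have := hmax a b (hab.toWalk) (by simp [hab.ne])
    simp [Walk.length_eq_zero_iff.mpr hnil] at this
  refine ⟨u, p.snd, p.adj_snd hnil, fun z hz => hG.eq_snd_of_adj_start hp hz ?_⟩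
  by_contra hzp
  have := hmax z v _ (hp.cons hzp (h := hz.symm))
  simp at this

end SimpleGraph

namespace Matrix

variable {α : Type*} [DecidableEq α]

/-- `|det M[R, C]|`, taken along any bijection `R ≃ C` (`absDet_eq_of_equiv`); it is `0` when
`R` and `C` have different sizes. -/
noncomputable def absDet (M : Matrix α α ℤ) (R C : Finset α) : ℕ :=
  if h : #R = #C then
    (M.submatrix ((↑) : R → α)
      (fun i => (Fintype.equivOfCardEq (by simpa using h) i : C))).det.natAbs
  else 0

variable (M : Matrix α α ℤ) {R C : Finset α}

theorem absDet_of_card_ne (h : #R ≠ #C) : absDet M R C = 0 :=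
  dif_neg h

theorem absDet_eq_of_equiv (e : R ≃ C) :
    absDet M R C = (M.submatrix ((↑) : R → α) (fun i => (e i : α))).det.natAbs := by
  have h : #R = #C := by simpa using Fintype.card_congr e
  rw [absDet, dif_pos h, ← Int.natAbs_abs, ← abs_det_submatrix_equiv_equiv (Equiv.refl R)
    (e.trans (Fintype.equivOfCardEq (by simpa using h)).symm), Int.natAbs_abs]
  congr 2
  ext i j
  simp

theorem absDet_submatrix {ι : Type*} [Fintype ι] [DecidableEq ι] {f g : ι → α}
    (hf : Injective f) (hg : Injective g) :
    absDet M (univ.image f) (univ.image g) = (M.submatrix f g).det.natAbs := by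
  have onto {h : ι → α} (hh : Injective h) : ∃ σ : ι ≃ univ.image h, ∀ i, (σ i : α) = h i :=
    ⟨Equiv.ofBijective (fun i => ⟨h i, mem_image_of_mem h (mem_univ i)⟩)
      ⟨fun i j hij => hh (congrArg Subtype.val hij), fun ⟨a, ha⟩ => by
        obtain ⟨i, -, rfl⟩ := mem_image.mp ha; exact ⟨i, rfl⟩⟩, fun _ => rfl⟩
  obtain ⟨σ, hσ⟩ := onto hf
  obtain ⟨τ, hτ⟩ := onto hg
  rw [absDet_eq_of_equiv M (σ.symm.trans τ), ← det_submatrix_equiv_self σ]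
  congr 2
  ext i j
  simp [hσ, hτ]

theorem absDet_congr {M' : Matrix α α ℤ} (h : ∀ r ∈ R, ∀ c ∈ C, M r c = M' r c) :
    absDet M R C = absDet M' R C := by
  unfold absDet
  split_ifs
  · congr 2
    ext i j
    exact h _ i.2 _ (coe_mem _)
  · rfl

theorem absDet_transpose : absDet Mᵀ R C = absDet M C R := by
  by_cases h : #R = #C
  · generalize hn : #C = n at h
    obtain ⟨f, hf, rfl⟩ := R.exists_injective_fin_image_eq h
    obtain ⟨g, hg, rfl⟩ := C.exists_injective_fin_image_eq hn
    rw [absDet_submatrix _ hf hg, absDet_submatrix _ hg hf, ← det_transpose, transpose_submatrix,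
      transpose_transpose]
  · rw [absDet_of_card_ne _ h, absDet_of_card_ne _ (Ne.symm h)]

theorem absDet_le_sum_col {c : α} (hc : c ∈ C) :
    absDet M R C ≤ ∑ r ∈ R, (M r c).natAbs * absDet M (R.erase r) (C.erase c) := by
  by_cases h : #R = #C
  · obtain ⟨n, hn⟩ := Nat.exists_eq_succ_of_ne_zero (card_ne_zero_of_mem hc)
    obtain ⟨f, hf, rfl⟩ := R.exists_injective_fin_image_eq (h.trans hn)
    obtain ⟨g, hg, rfl⟩ := C.exists_injective_fin_image_eq hn
    obtain ⟨j, -, rfl⟩ := mem_image.mp hc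
    rw [absDet_submatrix _ hf hg, det_succ_column (M.submatrix f g) j, sum_image hf.injOn]
    refine (Int.natAbs_sum_le _ _).trans (sum_le_sum fun i _ => le_of_eq ?_)
    rw [← Fin.univ_image_comp_succAbove hf, ← Fin.univ_image_comp_succAbove hg, absDet_submatrix _
      (hf.comp Fin.succAbove_right_injective) (hg.comp Fin.succAbove_right_injective)]
    simp [Int.natAbs_mul, submatrix_submatrix]
  · simp [absDet_of_card_ne _ h]

theorem absDet_updateCol_sub {c c' : α} (hc : c ∈ C) (hc' : c' ∈ C) (hne : c ≠ c') :
    absDet (M.updateCol c fun r => M r c - M r c') R C = absDet M R C := by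
  by_cases h : #R = #C
  · generalize hn : #C = n at h
    obtain ⟨f, hf, rfl⟩ := R.exists_injective_fin_image_eq h
    obtain ⟨g, hg, rfl⟩ := C.exists_injective_fin_image_eq hn
    obtain ⟨j, -, rfl⟩ := mem_image.mp hc
    obtain ⟨j', -, rfl⟩ := mem_image.mp hc'
    rw [absDet_submatrix _ hf hg, absDet_submatrix _ hf hg,
      ← det_updateCol_add_smul_self (M.submatrix f g) (hg.ne_iff.mp hne) (-1)]
    congr 2
    ext a b
    by_cases hb : b = j
    · subst hb; simp [sub_eq_add_neg]
    · simp [hb, hg.eq_iff]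
  · rw [absDet_of_card_ne _ h, absDet_of_card_ne _ h]

theorem absDet_le_sum_col_sub {c c' : α} (hc : c ∈ C) (hc' : c' ∈ C) (hne : c ≠ c') :
    absDet M R C ≤ ∑ r ∈ R, (M r c - M r c').natAbs * absDet M (R.erase r) (C.erase c) := by
  rw [← absDet_updateCol_sub M hc hc' hne]
  refine (absDet_le_sum_col _ hc).trans (le_of_eq (sum_congr rfl fun r _ => ?_))
  rw [updateCol_self]
  congr 1
  exact absDet_congr _ fun r' _ c'' hc'' => updateCol_ne (ne_of_mem_erase hc'')

theorem absDet_le_erase_of_col {c r₀ : α} (hc : c ∈ C) (h₀ : (M r₀ c).natAbs ≤ 1)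
    (h : ∀ r ∈ R, r ≠ r₀ → M r c = 0) :
    absDet M R C ≤ absDet M (R.erase r₀) (C.erase c) :=
  (absDet_le_sum_col M hc).trans (sum_natAbs_mul_le_of_single h₀ h)

theorem absDet_le_erase_of_row {r c₀ : α} (hr : r ∈ R) (h₀ : (M r c₀).natAbs ≤ 1)
    (h : ∀ c ∈ C, c ≠ c₀ → M r c = 0) :
    absDet M R C ≤ absDet M (R.erase r) (C.erase c₀) := by
  simpa only [absDet_transpose, transpose_transpose] using absDet_le_erase_of_col Mᵀ hr h₀ h

theorem absDet_le_erase_of_col_sub {c c' r₀ : α} (hc : c ∈ C) (hc' : c' ∈ C) (hne : c ≠ c')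
    (h₀ : (M r₀ c - M r₀ c').natAbs ≤ 1) (h : ∀ r ∈ R, r ≠ r₀ → M r c = M r c') :
    absDet M R C ≤ absDet M (R.erase r₀) (C.erase c) :=
  (absDet_le_sum_col_sub M hc hc' hne).trans
    (sum_natAbs_mul_le_of_single h₀ fun r hr hr₀ => sub_eq_zero.mpr (h r hr hr₀))

theorem absDet_one_le_one (R C : Finset α) : absDet (1 : Matrix α α ℤ) R C ≤ 1 := by
  induction C using Finset.induction_on generalizing R with
  | empty =>
    by_cases h : #R = #(∅ : Finset α)
    · rw [card_empty, card_eq_zero] at h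
      subst h
      simp [absDet_eq_of_equiv 1 (Equiv.refl _)]
    · simp [absDet_of_card_ne _ h]
  | insert c C hc ih =>
    refine (absDet_le_erase_of_col 1 (mem_insert_self c C) (r₀ := c) (by simp)
      fun r _ hr => one_apply_ne hr).trans ?_
    rw [erase_insert hc]
    exact ih _

end Matrix

section TotalMatrixOn

open Sum

variable {V : Type*} {G : SimpleGraph V}

noncomputable def totalMatrixOn (S : Finset G.edgeSet) :
    Matrix (V ⊕ G.edgeSet) (V ⊕ G.edgeSet) ℤ
  | inl v, inl w => if v = w then 1 else 0
  | inl v, inr e => if e ∈ S ∧ v ∈ (e : Sym2 V) then 1 else 0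
  | inr e, inl v => if e ∈ S ∧ v ∈ (e : Sym2 V) then 1 else 0
  | inr e, inr f => if e = f then 1 else 0

variable (S : Finset G.edgeSet)

@[simp] theorem totalMatrixOn_inl_inl (v w : V) :
    totalMatrixOn S (inl v) (inl w) = if v = w then 1 else 0 := rfl

@[simp] theorem totalMatrixOn_inl_inr (v : V) (e : G.edgeSet) :
    totalMatrixOn S (inl v) (inr e) = if e ∈ S ∧ v ∈ (e : Sym2 V) then 1 else 0 := rfl

@[simp] theorem totalMatrixOn_inr_inl (e : G.edgeSet) (v : V) :
    totalMatrixOn S (inr e) (inl v) = if e ∈ S ∧ v ∈ (e : Sym2 V) then 1 else 0 := rfl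

@[simp] theorem totalMatrixOn_inr_inr (e f : G.edgeSet) :
    totalMatrixOn S (inr e) (inr f) = if e = f then 1 else 0 := rfl

theorem totalMatrixOn_comm (a b : V ⊕ G.edgeSet) : totalMatrixOn S a b = totalMatrixOn S b a := by
  rcases a with v | e <;> rcases b with w | f <;> simp [eq_comm]

theorem totalMatrixOn_transpose : (totalMatrixOn S)ᵀ = totalMatrixOn S :=
  Matrix.ext fun a b => totalMatrixOn_comm S b a

theorem absDet_totalMatrixOn_comm (R C : Finset (V ⊕ G.edgeSet)) :
    absDet (totalMatrixOn S) R C = absDet (totalMatrixOn S) C R := by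
  rw [← absDet_transpose, totalMatrixOn_transpose]

theorem natAbs_totalMatrixOn_le_one (a b : V ⊕ G.edgeSet) : (totalMatrixOn S a b).natAbs ≤ 1 := by
  rcases a with v | e <;> rcases b with w | f <;> simp only [totalMatrixOn] <;> split_ifs <;> simp

theorem totalMatrixOn_empty : totalMatrixOn (∅ : Finset G.edgeSet) = 1 := by
  ext (v | e) (w | f) <;> simp [Matrix.one_apply]

theorem totalMatrixOn_erase_apply {e₀ : G.edgeSet} {a b : V ⊕ G.edgeSet} (ha : a ≠ inr e₀)
    (hb : b ≠ inr e₀) : totalMatrixOn (S.erase e₀) a b = totalMatrixOn S a b := by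
  rcases a with v | e <;> rcases b with w | f <;> simp_all

theorem totalMatrix_eq_totalMatrixOn_univ [Fintype G.edgeSet] :
    totalMatrix G = totalMatrixOn (univ : Finset G.edgeSet) := by
  ext (v | e) (w | f) <;> simp [totalMatrix]

end TotalMatrixOn

section DegProd

open Sum SimpleGraph

variable {V : Type*} {G : SimpleGraph V}

noncomputable def degOn (S : Finset G.edgeSet) (v : V) : ℕ :=
  #(S.filter fun e : G.edgeSet => v ∈ (e : Sym2 V))

/-- Thanks to `max 1`, this is the product of the degrees `≥ 2` of the vertices in `A`. -/
noncomputable def degProd (S : Finset G.edgeSet) (A : Finset (V ⊕ G.edgeSet)) : ℕ :=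
  ∏ v ∈ A.toLeft, max 1 (degOn S v)

theorem degOn_mono {S' S : Finset G.edgeSet} (h : S' ⊆ S) (v : V) : degOn S' v ≤ degOn S v :=
  card_le_card (filter_subset_filter _ h)

theorem degProd_mono {S' S : Finset G.edgeSet} {A' A : Finset (V ⊕ G.edgeSet)} (hS : S' ⊆ S)
    (hA : A' ⊆ A) : degProd S' A' ≤ degProd S A :=
  calc degProd S' A' ≤ ∏ v ∈ A'.toLeft, max 1 (degOn S v) :=
        prod_le_prod' fun v _ => max_le_max_left 1 (degOn_mono hS v)
    _ ≤ degProd S A :=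
        prod_le_prod_of_subset_of_one_le' (toLeft_subset_toLeft hA) fun _ _ _ => le_max_left _ _

theorem degProd_erase_inter_erase_le (S : Finset G.edgeSet) (R C : Finset (V ⊕ G.edgeSet))
    (a b : V ⊕ G.edgeSet) : degProd S (R.erase a ∩ C.erase b) ≤ degProd S (R ∩ C) :=
  degProd_mono subset_rfl (inter_subset_inter (erase_subset _ _) (erase_subset _ _))

theorem degProd_empty (A : Finset (V ⊕ G.edgeSet)) : degProd (∅ : Finset G.edgeSet) A = 1 :=
  prod_eq_one fun v _ => by simp [degOn]

theorem pred_degOn_mul_degProd_le {S' S : Finset G.edgeSet} (hS : S' ⊆ S)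
    {A : Finset (V ⊕ G.edgeSet)} {w : V} (hw : inl w ∈ A) :
    (degOn S w - 1) * degProd S' (A.erase (inl w)) ≤ degProd S A := by
  have hleft : (A.erase (inl w)).toLeft = A.toLeft.erase w := by ext; simp
  unfold degProd
  rw [hleft, ← mul_prod_erase A.toLeft (fun v => max 1 (degOn S v)) (mem_toLeft.mpr hw)]
  exact Nat.mul_le_mul (by omega) (prod_le_prod' fun v _ => max_le_max_left 1 (degOn_mono hS v))

theorem degProd_univ [Fintype V] [DecidableRel G.Adj] [Fintype G.edgeSet] :
    degProd (univ : Finset G.edgeSet) univ = ∏ v ∈ univ.filter (2 ≤ G.degree ·), G.degree v := by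
  have hdeg (v : V) : degOn (univ : Finset G.edgeSet) v = G.degree v := by
    rw [← G.card_incidenceFinset_eq_degree v, degOn]
    refine card_bij (fun e _ => (e : Sym2 V)) (fun e he => ?_) (fun _ _ _ _ => Subtype.ext)
      fun e he => ?_
    · simpa [incidenceSet] using he
    · simp only [mem_incidenceFinset, incidenceSet, Set.mem_ofPred_eq] at he
      exact ⟨⟨e, he.1⟩, by simpa using he.2, rfl⟩
  rw [degProd, toLeft_univ, prod_filter]
  refine prod_congr rfl fun v _ => ?_
  rw [hdeg]
  split_ifs <;> omega

end DegProd

section Pendant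

open Sum

variable {V : Type*} {G : SimpleGraph V}

def SubdetBound (S : Finset G.edgeSet) : Prop :=
  ∀ R C : Finset (V ⊕ G.edgeSet), absDet (totalMatrixOn S) R C ≤ degProd S (R ∩ C)

theorem subdetBound_empty : SubdetBound (∅ : Finset G.edgeSet) := fun R C => by
  rw [totalMatrixOn_empty, degProd_empty]
  exact absDet_one_le_one R C

theorem SubdetBound.absDet_le_of_notMem {S : Finset G.edgeSet} {e₀ : G.edgeSet}
    (ih : SubdetBound (S.erase e₀)) {R C : Finset (V ⊕ G.edgeSet)} (hR : inr e₀ ∉ R)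
    (hC : inr e₀ ∉ C) : absDet (totalMatrixOn S) R C ≤ degProd (S.erase e₀) (R ∩ C) := by
  rw [← absDet_congr _ fun r hr c hc => totalMatrixOn_erase_apply S (ne_of_mem_of_not_mem hr hR)
    (ne_of_mem_of_not_mem hc hC)]
  exact ih R C

theorem SubdetBound.absDet_le_of_subset_of_notMem {S : Finset G.edgeSet} {e₀ : G.edgeSet}
    (ih : SubdetBound (S.erase e₀)) {R C R' C' : Finset (V ⊕ G.edgeSet)} (hRR' : R' ⊆ R)
    (hCC' : C' ⊆ C) (hR : inr e₀ ∉ R') (hC : inr e₀ ∉ C') :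
    absDet (totalMatrixOn S) R' C' ≤ degProd S (R ∩ C) :=
  (ih.absDet_le_of_notMem hR hC).trans
    (degProd_mono (erase_subset _ _) (inter_subset_inter hRR' hCC'))

structure IsPendantEdge (S : Finset G.edgeSet) (e₀ : G.edgeSet) (u w : V) : Prop where
  mem : e₀ ∈ S
  coe_eq : (e₀ : Sym2 V) = s(u, w)
  eq_of_mem : ∀ e ∈ S, u ∈ (e : Sym2 V) → e = e₀

namespace IsPendantEdge

variable {S : Finset G.edgeSet} {e₀ : G.edgeSet} {u w : V} {R C : Finset (V ⊕ G.edgeSet)}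

theorem ne (hp : IsPendantEdge S e₀ u w) : u ≠ w :=
  G.ne_of_adj (G.mem_edgeSet.mp (hp.coe_eq ▸ e₀.2))

theorem totalMatrixOn_inl_eq_zero (hp : IsPendantEdge S e₀ u w) {r : V ⊕ G.edgeSet}
    (hu : r ≠ inl u) (he : r ≠ inr e₀) : totalMatrixOn S r (inl u) = 0 := by
  rcases r with v | e
  · simpa using hu
  · simpa using fun heS hue => he (congrArg inr (hp.eq_of_mem e heS hue))

theorem totalMatrixOn_inr_eq_zero (hp : IsPendantEdge S e₀ u w) {r : V ⊕ G.edgeSet}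
    (he : r ≠ inr e₀) (hu : r ≠ inl u) (hw : r ≠ inl w) : totalMatrixOn S r (inr e₀) = 0 := by
  rcases r with v | e
  · simp_all [hp.coe_eq]
  · simpa using he

theorem absDet_le_of_leaf_notMem_rows (hp : IsPendantEdge S e₀ u w)
    (ih : SubdetBound (S.erase e₀)) (huR : inl u ∉ R) (heR : inr e₀ ∉ R) :
    absDet (totalMatrixOn S) R C ≤ degProd S (R ∩ C) := by
  by_cases heC : inr e₀ ∈ C
  · refine (absDet_le_erase_of_col _ heC (natAbs_totalMatrixOn_le_one S (inl w) _) fun r hr hrw =>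
      hp.totalMatrixOn_inr_eq_zero (ne_of_mem_of_not_mem hr heR) (ne_of_mem_of_not_mem hr huR)
        hrw).trans ?_
    exact ih.absDet_le_of_subset_of_notMem (erase_subset _ _) (erase_subset _ _)
      (fun h => heR (mem_of_mem_erase h)) (notMem_erase _ _)
  · exact ih.absDet_le_of_subset_of_notMem subset_rfl subset_rfl heR heC

theorem absDet_erase_erase_le (hp : IsPendantEdge S e₀ u w) (ih : SubdetBound (S.erase e₀))
    (huC : inl u ∉ C) (heR : inr e₀ ∈ R) {e : G.edgeSet} (he : e ≠ e₀) :
    absDet (totalMatrixOn S) (R.erase (inr e)) (C.erase (inr e₀)) ≤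
      degProd (S.erase e₀) ((R ∩ C).erase (inl w)) :=
  calc absDet (totalMatrixOn S) (R.erase (inr e)) (C.erase (inr e₀))
      ≤ absDet (totalMatrixOn S) ((R.erase (inr e)).erase (inr e₀))
          ((C.erase (inr e₀)).erase (inl w)) :=
        absDet_le_erase_of_row _ (mem_erase.mpr ⟨by simpa using Ne.symm he, heR⟩)
          (natAbs_totalMatrixOn_le_one S _ _) fun c hc hcw =>
            (totalMatrixOn_comm S _ _).trans (hp.totalMatrixOn_inr_eq_zero (ne_of_mem_erase hc)
              (ne_of_mem_of_not_mem (mem_of_mem_erase hc) huC) hcw)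
    _ ≤ degProd (S.erase e₀) _ :=
        ih.absDet_le_of_notMem (notMem_erase _ _) fun h => ne_of_mem_erase (mem_of_mem_erase h) rfl
    _ ≤ degProd (S.erase e₀) ((R ∩ C).erase (inl w)) := degProd_mono subset_rfl fun x hx => by
        simp only [mem_inter, mem_erase] at hx ⊢
        exact ⟨hx.2.1, hx.1.2.2, hx.2.2.2⟩

theorem absDet_le_of_leaf_notMem_of_mem (hp : IsPendantEdge S e₀ u w)
    (ih : SubdetBound (S.erase e₀)) (huR : inl u ∉ R) (huC : inl u ∉ C)
    (heR : inr e₀ ∈ R) (heC : inr e₀ ∈ C) (hwR : inl w ∈ R) (hwC : inl w ∈ C) :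
    absDet (totalMatrixOn S) R C ≤ degProd S (R ∩ C) := by
  set N := totalMatrixOn S
  set T := ((S.filter fun e : G.edgeSet => w ∈ (e : Sym2 V)).erase e₀).map Embedding.inr
  set Q := degProd (S.erase e₀) ((R ∩ C).erase (inl w))
  -- column `e₀` minus column `w` is `-1` in the rows of `T` and `0` elsewhere
  have hterm : ∀ r ∈ R, (N r (inr e₀) - N r (inl w)).natAbs *
      absDet N (R.erase r) (C.erase (inr e₀)) ≤ if r ∈ T then Q else 0 := by
    rintro (v | e) hr
    · have hvu : v ≠ u := fun h => huR (h ▸ hr)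
      simp [N, hp.coe_eq, hp.mem, hvu]
    by_cases he : e = e₀
    · subst he
      simp [N, hp.coe_eq, hp.mem]
    split_ifs with heT
    · have hew : e ∈ S ∧ w ∈ (e : Sym2 V) := by simpa [T, he] using heT
      simpa [N, he, hew] using hp.absDet_erase_erase_le ih huC heR he
    · have hew : ¬(e ∈ S ∧ w ∈ (e : Sym2 V)) := by simpa [T, he] using heT
      simp [N, he, hew]
  calc absDet N R C
      ≤ ∑ r ∈ R, (N r (inr e₀) - N r (inl w)).natAbs *
          absDet N (R.erase r) (C.erase (inr e₀)) :=
        absDet_le_sum_col_sub _ heC hwC (by simp)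
    _ ≤ ∑ r ∈ R, if r ∈ T then Q else 0 := sum_le_sum hterm
    _ = #(R ∩ T) * Q := by rw [sum_ite_mem, sum_const, smul_eq_mul]
    _ ≤ (degOn S w - 1) * Q := by
        refine Nat.mul_le_mul_right _ ((card_le_card inter_subset_right).trans ?_)
        rw [card_map, card_erase_of_mem (mem_filter.mpr ⟨hp.mem, by simp [hp.coe_eq]⟩)]
        rfl
    _ ≤ degProd S (R ∩ C) :=
        pred_degOn_mul_degProd_le (erase_subset _ _) (mem_inter.mpr ⟨hwR, hwC⟩)

theorem absDet_le_of_leaf_notMem (hp : IsPendantEdge S e₀ u w) (ih : SubdetBound (S.erase e₀))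
    (huR : inl u ∉ R) (huC : inl u ∉ C) : absDet (totalMatrixOn S) R C ≤ degProd S (R ∩ C) := by
  by_cases heR : inr e₀ ∈ R
  swap
  · exact hp.absDet_le_of_leaf_notMem_rows ih huR heR
  by_cases heC : inr e₀ ∈ C
  swap
  · rw [absDet_totalMatrixOn_comm, inter_comm]
    exact hp.absDet_le_of_leaf_notMem_rows ih huC heC
  have hpivot : absDet (totalMatrixOn S) (R.erase (inr e₀)) (C.erase (inr e₀)) ≤
      degProd S (R ∩ C) :=
    ih.absDet_le_of_subset_of_notMem (erase_subset _ _) (erase_subset _ _) (notMem_erase _ _)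
      (notMem_erase _ _)
  by_cases hwR : inl w ∈ R
  swap
  · exact (absDet_le_erase_of_col _ heC (natAbs_totalMatrixOn_le_one S _ _) fun r hr hre =>
      hp.totalMatrixOn_inr_eq_zero hre (ne_of_mem_of_not_mem hr huR)
        (ne_of_mem_of_not_mem hr hwR)).trans hpivot
  by_cases hwC : inl w ∈ C
  swap
  · exact (absDet_le_erase_of_row _ heR (natAbs_totalMatrixOn_le_one S _ _) fun c hc hce =>
      (totalMatrixOn_comm S _ _).trans (hp.totalMatrixOn_inr_eq_zero hce
        (ne_of_mem_of_not_mem hc huC) (ne_of_mem_of_not_mem hc hwC))).trans hpivot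
  exact hp.absDet_le_of_leaf_notMem_of_mem ih huR huC heR heC hwR hwC

theorem absDet_le_of_leaf_notMem_cols (hp : IsPendantEdge S e₀ u w)
    (ih : SubdetBound (S.erase e₀)) (huC : inl u ∉ C) :
    absDet (totalMatrixOn S) R C ≤ degProd S (R ∩ C) := by
  by_cases huR : inl u ∈ R
  · calc absDet (totalMatrixOn S) R C
        ≤ absDet (totalMatrixOn S) (R.erase (inl u)) (C.erase (inr e₀)) :=
          absDet_le_erase_of_row _ huR (natAbs_totalMatrixOn_le_one S _ _) fun c hc hce =>
            (totalMatrixOn_comm S _ _).trans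
              (hp.totalMatrixOn_inl_eq_zero (ne_of_mem_of_not_mem hc huC) hce)
      _ ≤ degProd S (R.erase (inl u) ∩ C.erase (inr e₀)) :=
          hp.absDet_le_of_leaf_notMem ih (notMem_erase _ _) fun h => huC (mem_of_mem_erase h)
      _ ≤ degProd S (R ∩ C) := degProd_erase_inter_erase_le _ _ _ _ _
  · exact hp.absDet_le_of_leaf_notMem ih huR huC

theorem absDet_le_of_leaf_mem (hp : IsPendantEdge S e₀ u w) (ih : SubdetBound (S.erase e₀))
    (huR : inl u ∈ R) (huC : inl u ∈ C) : absDet (totalMatrixOn S) R C ≤ degProd S (R ∩ C) := by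
  have hdiag : absDet (totalMatrixOn S) (R.erase (inl u)) (C.erase (inl u)) ≤ degProd S (R ∩ C) :=
    (hp.absDet_le_of_leaf_notMem ih (notMem_erase _ _) (notMem_erase _ _)).trans
      (degProd_erase_inter_erase_le _ _ _ _ _)
  by_cases heR : inr e₀ ∈ R
  swap
  · exact (absDet_le_erase_of_col _ huC (natAbs_totalMatrixOn_le_one S _ _) fun r hr hru =>
      hp.totalMatrixOn_inl_eq_zero hru (ne_of_mem_of_not_mem hr heR)).trans hdiag
  by_cases heC : inr e₀ ∈ C
  swap
  · exact (absDet_le_erase_of_row _ huR (natAbs_totalMatrixOn_le_one S _ _) fun c hc hcu =>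
      (totalMatrixOn_comm S _ _).trans
        (hp.totalMatrixOn_inl_eq_zero hcu (ne_of_mem_of_not_mem hc heC))).trans hdiag
  have hcols : ∀ r ∈ R, r ≠ inl w → totalMatrixOn S r (inl u) = totalMatrixOn S r (inr e₀) := by
    rintro (v | e) - hvw
    · simp_all [hp.coe_eq, hp.mem, eq_comm]
    · by_cases he : e = e₀
      · simp [he, hp.coe_eq, hp.mem]
      · simpa [he] using fun heS hue => he (hp.eq_of_mem e heS hue)
  calc absDet (totalMatrixOn S) R C
      ≤ absDet (totalMatrixOn S) (R.erase (inl w)) (C.erase (inl u)) :=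
        absDet_le_erase_of_col_sub _ huC heC (by simp)
          (by simp [hp.coe_eq, hp.mem, hp.ne.symm]) hcols
    _ ≤ degProd S (R.erase (inl w) ∩ C.erase (inl u)) :=
        hp.absDet_le_of_leaf_notMem_cols ih (notMem_erase _ _)
    _ ≤ degProd S (R ∩ C) := degProd_erase_inter_erase_le _ _ _ _ _

theorem subdetBound_of_erase (hp : IsPendantEdge S e₀ u w) (ih : SubdetBound (S.erase e₀)) :
    SubdetBound S := by
  intro R C
  by_cases huC : inl u ∈ C
  · by_cases huR : inl u ∈ R
    · exact hp.absDet_le_of_leaf_mem ih huR huC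
    · rw [absDet_totalMatrixOn_comm, inter_comm]
      exact hp.absDet_le_of_leaf_notMem_cols ih huR
  · exact hp.absDet_le_of_leaf_notMem_cols ih huC

end IsPendantEdge

end Pendant

section Forest

open Sum SimpleGraph

variable {V : Type*} {G : SimpleGraph V}

theorem exists_isPendantEdge (hG : G.IsAcyclic) {S : Finset G.edgeSet} (hS : S.Nonempty) :
    ∃ e₀ u w, IsPendantEdge S e₀ u w := by
  let H := fromEdgeSet (((↑) : G.edgeSet → Sym2 V) '' S)
  have hHG : H ≤ G := (fromEdgeSet_le G).mpr fun e ⟨⟨e', _, he'⟩, _⟩ => he' ▸ e'.2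
  have hHadj {e : G.edgeSet} {a b : V} (he : e ∈ S) (hab : (e : Sym2 V) = s(a, b)) : H.Adj a b :=
    (fromEdgeSet_adj _).mpr ⟨⟨e, he, hab⟩, G.ne_of_adj (G.mem_edgeSet.mp (hab ▸ e.2))⟩
  have : Finite H.edgeSet :=
    ((S.finite_toSet.image _).subset
      (by rw [edgeSet_fromEdgeSet]; exact Set.sdiff_subset)).to_subtype
  obtain ⟨e, he⟩ := hS
  obtain ⟨⟨a, b⟩, hab⟩ := Quot.exists_rep (e : Sym2 V)
  obtain ⟨u, w, huw, huniq⟩ := (hG.anti hHG).exists_adj_forall_adj_eq (hHadj he hab.symm)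
  obtain ⟨⟨e₀, he₀, he₀uw⟩, -⟩ := (fromEdgeSet_adj _).mp huw
  refine ⟨e₀, u, w, he₀, he₀uw, fun e he hue => ?_⟩
  obtain ⟨z, hz⟩ := Sym2.mem_iff_exists.mp hue
  exact Subtype.ext (hz.trans (huniq z (hHadj he hz) ▸ he₀uw.symm))

theorem subdetBound_of_isAcyclic (hG : G.IsAcyclic) (S : Finset G.edgeSet) : SubdetBound S := by
  induction S using Finset.strongInduction with
  | H S ih =>
    rcases S.eq_empty_or_nonempty with rfl | hS
    · exact subdetBound_empty
    · obtain ⟨e₀, u, w, hp⟩ := exists_isPendantEdge hG hS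
      exact hp.subdetBound_of_erase (ih _ (erase_ssubset hp.mem))

theorem maxSubdet_le_prod_degree [Fintype V] [DecidableRel G.Adj] (hG : G.IsAcyclic) :
    maxSubdet G ≤ ∏ v ∈ univ.filter (fun v => 2 ≤ G.degree v), G.degree v := by
  rw [← degProd_univ]
  refine csSup_le' ?_
  rintro d ⟨k, f, g, hf, hg, rfl⟩
  rw [← absDet_submatrix _ hf hg, totalMatrix_eq_totalMatrixOn_univ]
  exact (subdetBound_of_isAcyclic hG univ _ _).trans (degProd_mono subset_rfl (subset_univ _))

end Forest

theorem stmt16_general {V : Type*} [Fintype V] (G : SimpleGraph V) [DecidableRel G.Adj]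
    (hG : G.IsAcyclic) :
    (maxSubdet G : ℝ) ≤
      ((∑ v ∈ Finset.univ.filter (fun v => 2 ≤ G.degree v), (G.degree v : ℝ)) /
        ((Finset.univ.filter fun v => 2 ≤ G.degree v).card : ℝ)) ^
        (Finset.univ.filter fun v => 2 ≤ G.degree v).card :=
  calc (maxSubdet G : ℝ) ≤ ∏ v ∈ univ.filter (fun v => 2 ≤ G.degree v), (G.degree v : ℝ) := by
        exact_mod_cast maxSubdet_le_prod_degree hG
    _ ≤ _ := Real.prod_le_arith_mean_pow _ _ fun _ _ => Nat.cast_nonneg _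

/-- For a finite simple forest `G` with at least one vertex of degree at least `2`:
`Δ(G) ≤ ((∑_{i=1}^{n₂} dᵢ) / n₂)^{n₂}`, where `n₂` is the number of vertices of degree at
least `2` and the sum is over the degrees of those vertices. -/
theorem stmt16 {V : Type*} [Fintype V] (G : SimpleGraph V) [DecidableRel G.Adj]
    (hG : G.IsAcyclic)
    (hn2 : 1 ≤ (Finset.univ.filter fun v => 2 ≤ G.degree v).card) :
    (maxSubdet G : ℝ) ≤
      ((∑ v ∈ Finset.univ.filter (fun v => 2 ≤ G.degree v), (G.degree v : ℝ)) /
        ((Finset.univ.filter fun v => 2 ≤ G.degree v).card : ℝ)) ^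
        (Finset.univ.filter fun v => 2 ≤ G.degree v).card :=
  stmt16_general G hG
end
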